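/- arXiv:1312.4182 — 2 statements merged into one kernel-verified Lean document; each statement's English description precedes it below -/
import Mathlib

section
/- Let F be a finite field and x, y ∈ F^n. Then there exists a string z ∈ F^n such that the Hamming distance Δ(x+z, x) ≥ Δ(x+z, y), and for every j ≤ n, the Hamming weight of the prefix (z_1, …, z_j) is at most (j+1)/2. -/
/-!
Put `d = y - x` and let `z` agree with `d` on the first, third, fifth, … position of the
support of `d` and vanish elsewhere. If `d` has weight `w`, then `x + z` differs from `x` in
`⌈w/2⌉` positions and from `y` in the remaining `⌊w/2⌋`. Since the selected positions
alternate, a prefix of length `j` contains at most `⌈j/2⌉` of them.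
-/

open Finset

namespace Finset

variable {α : Type*} [LinearOrder α]

/-- The first, third, fifth, … elements of `s`. -/
def everyOther (s : Finset α) : Finset α :=
  {i ∈ s | Even #{k ∈ s | k < i}}

theorem everyOther_subset (s : Finset α) : s.everyOther ⊆ s :=
  filter_subset _ _

theorem card_everyOther (s : Finset α) : #s.everyOther = (#s + 1) / 2 := by
  induction s using Finset.induction_on_max with
  | empty => simp [everyOther]
  | insert a s hlt ih =>
    have ha : a ∉ s := fun h => lt_irrefl a (hlt a h)
    have hrank : ∀ i ∈ s, {k ∈ insert a s | k < i} = {k ∈ s | k < i} := fun i hi => by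
      rw [filter_insert, if_neg (lt_asymm (hlt i hi))]
    have hrank_a : {k ∈ insert a s | k < a} = s := by
      rw [filter_insert, if_neg (lt_irrefl a), filter_true_of_mem hlt]
    have hsplit : (insert a s).everyOther =
        if Even #s then insert a s.everyOther else s.everyOther := by
      unfold everyOther
      rw [filter_insert, hrank_a, filter_congr fun i hi => by rw [hrank i hi]]
    have hnot : a ∉ s.everyOther := fun h => ha (everyOther_subset s h)
    rw [hsplit, card_insert_of_notMem ha]
    split_ifs with hev
    · rw [card_insert_of_notMem hnot, ih]
      obtain ⟨m, hm⟩ := hev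
      omega
    · rw [ih]
      obtain ⟨m, hm⟩ := Nat.not_even_iff_odd.mp hev
      omega

/-- The rank of an element depends only on the smaller ones. -/
theorem filter_everyOther_of_isLowerSet (s : Finset α) (p : α → Prop) [DecidablePred p]
    (hp : IsLowerSet {a | p a}) :
    {i ∈ s.everyOther | p i} = {i ∈ s | p i}.everyOther := by
  have hrank : ∀ {i}, p i → {k ∈ {a ∈ s | p a} | k < i} = {k ∈ s | k < i} := fun hpi => by
    rw [filter_filter]
    exact filter_congr fun k _ => and_iff_right_of_imp fun hk : k < _ => hp hk.le hpi
  ext i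
  by_cases hpi : p i
  · simp only [everyOther, mem_filter, hrank hpi, hpi]
    tauto
  · simp [everyOther, hpi]

end Finset

section Hamming

variable {ι M : Type*} [Fintype ι] [DecidableEq ι] [Zero M] [DecidableEq M]

theorem hammingNorm_piecewise_zero (f : ι → M) {E : Finset ι}
    (hE : E ⊆ ({i | f i ≠ 0} : Finset ι)) :
    hammingNorm (E.piecewise f 0) = #E := by
  unfold hammingNorm
  congr 1
  ext i
  by_cases hi : i ∈ E
  · simpa [hi] using (mem_filter.mp (hE hi)).2
  · simp [hi]

theorem hammingDist_piecewise_zero (f : ι → M) {E : Finset ι}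
    (hE : E ⊆ ({i | f i ≠ 0} : Finset ι)) :
    hammingDist (E.piecewise f 0) f = hammingNorm f - #E := by
  have hdiff :
      ({i | E.piecewise f 0 i ≠ f i} : Finset ι) = ({i | f i ≠ 0} : Finset ι) \ E := by
    ext i
    by_cases hi : i ∈ E
    · simp [hi]
    · simp [hi, eq_comm]
  rw [hammingDist, hdiff, card_sdiff_of_subset hE, hammingNorm]

end Hamming

theorem stmt0_general {F : Type*} [Field F] [DecidableEq F] (n : ℕ)
    (x y : Fin n → F) :
    ∃ z : Fin n → F,
      hammingDist (x + z) y ≤ hammingDist (x + z) x ∧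
      ∀ j : ℕ, j ≤ n →
        2 * (Finset.univ.filter (fun i : Fin n => (i : ℕ) < j ∧ z i ≠ 0)).card ≤ j + 1 := by
  set d := -x + y
  set S : Finset (Fin n) := {i | d i ≠ 0}
  set E := S.everyOther
  have hES : E ⊆ S := S.everyOther_subset
  have hE : #E = (#S + 1) / 2 := S.card_everyOther
  refine ⟨E.piecewise d 0, ?_, fun j hj => ?_⟩
  · have hfar : hammingDist (x + E.piecewise d 0) x = #E := by
      rw [hammingDist_comm, hammingDist_eq_hammingNorm, neg_add_cancel_left,
        hammingNorm_piecewise_zero d hES]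
    have hnear : hammingDist (x + E.piecewise d 0) y = #S - #E := by
      have htranslate :
          hammingDist (x + E.piecewise d 0) y = hammingDist (E.piecewise d 0) d := by
        rw [hammingDist_eq_hammingNorm, hammingDist_eq_hammingNorm]
        congr 1
        simp only [d]
        abel
      rw [htranslate, hammingDist_piecewise_zero d hES]
      rfl
    omega
  · have hprefix : ({i | (i : ℕ) < j ∧ E.piecewise d 0 i ≠ 0} : Finset (Fin n)) =
        {i ∈ S | i.val < j}.everyOther := by
      rw [← filter_everyOther_of_isLowerSet S (fun i : Fin n => (i : ℕ) < j)
        fun _ _ hba ha => Nat.lt_of_le_of_lt hba ha]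
      ext i
      by_cases hi : i ∈ E
      · simp [E, hi, (mem_filter.mp (hES hi)).2]
      · simp [E, hi]
    have hS : #{i ∈ S | i.val < j} ≤ j :=
      calc #{i ∈ S | i.val < j} ≤ #{i : Fin n | (i : ℕ) < j} :=
            card_le_card (filter_subset_filter _ (subset_univ S))
        _ ≤ j := Fin.card_filter_val_lt.trans_le (min_le_right n j)
    rw [hprefix, card_everyOther]
    omega

/-- For a finite field `F` and strings `x, y ∈ F^n` there exists `z ∈ F^n` with
`Δ(x+z, x) ≥ Δ(x+z, y)` and, for every `j ≤ n`, the Hamming weight of the prefix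
`(z_1, …, z_j)` is at most `(j+1)/2`. -/
theorem stmt0 {F : Type*} [Field F] [Fintype F] [DecidableEq F] (n : ℕ)
    (x y : Fin n → F) :
    ∃ z : Fin n → F,
      hammingDist (x + z) y ≤ hammingDist (x + z) x ∧
      ∀ j : ℕ, j ≤ n →
        2 * (Finset.univ.filter (fun i : Fin n => (i : ℕ) < j ∧ z i ≠ 0)).card ≤ j + 1 :=
  stmt0_general n x y
end

section
/- Let F be a finite field and x, y ∈ F^n with Δ(x, y) = d even. Then there exists z ∈ F^n such that Δ(x+z, x) ≥ Δ(x+z, y) and for every j ≤ n, the Hamming weight of the prefix (z_1, …, z_j) is at most j/2. -/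
/-!
Let `S` be the `2m` coordinates where `x` and `y` differ, and let `z = y - x` on the last `m`
coordinates of `S` and `0` elsewhere. Then `x + z` is at distance `m` from both `x` and `y`.
A prefix that meets the support of `z` contains all of the first `m` coordinates of `S`,
so it is at least twice as long as the part of the support it contains.
-/

open Finset

theorem Finset.exists_subsets_card_eq_forall_lt {α : Type*} [LinearOrder α] (S : Finset α)
    {a b : ℕ} (h : S.card = a + b) :
    ∃ L ⊆ S, ∃ T ⊆ S, L.card = a ∧ T.card = b ∧ ∀ l ∈ L, ∀ t ∈ T, l < t := by
  set f := S.orderEmbOfFin h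
  refine ⟨univ.map ((Fin.castAddEmb b).trans f.toEmbedding), ?_,
    univ.map ((Fin.natAddEmb a).trans f.toEmbedding), ?_, by simp, by simp, ?_⟩
  · simp [subset_iff, f, orderEmbOfFin_mem]
  · simp [subset_iff, f, orderEmbOfFin_mem]
  · simp only [mem_map, mem_univ, true_and, forall_exists_index, forall_apply_eq_imp_iff]
    intro i j
    exact f.strictMono (by simp [Fin.lt_def]; omega)

theorem two_mul_card_filter_le_of_forall_lt {α : Type*} [LinearOrder α] {L T : Finset α}
    (hcard : T.card ≤ L.card) (hlt : ∀ l ∈ L, ∀ t ∈ T, l < t)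
    (p : α → Prop) [DecidablePred p] (hp : Antitone p) :
    2 * (T.filter p).card ≤ ((L ∪ T).filter p).card := by
  rcases (T.filter p).eq_empty_or_nonempty with hempty | ⟨t, ht⟩
  · simp [hempty]
  rw [mem_filter] at ht
  have hL : L.filter p = L := filter_true_of_mem fun l hl => hp (hlt l hl t ht.1).le ht.2
  have hdisj : Disjoint L T := disjoint_left.2 fun l hl hlT => (hlt l hl l hlT).false
  rw [filter_union, card_union_of_disjoint (disjoint_filter_filter hdisj), hL]
  have := card_filter_le T p
  omega

section Hamming

variable {ι β : Type*} [Fintype ι] [DecidableEq ι] [DecidableEq β] {x y : ι → β} {T : Finset ι}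

theorem piecewise_ne_left_iff (hT : T ⊆ univ.filter fun i => x i ≠ y i) (i : ι) :
    T.piecewise y x i ≠ x i ↔ i ∈ T := by
  by_cases hi : i ∈ T
  · simpa [hi] using (mem_filter.1 (hT hi)).2.symm
  · simp [hi]

theorem hammingDist_piecewise_left (hT : T ⊆ univ.filter fun i => x i ≠ y i) :
    hammingDist (T.piecewise y x) x = T.card := by
  simp [hammingDist, piecewise_ne_left_iff hT]

theorem hammingDist_piecewise_right (hT : T ⊆ univ.filter fun i => x i ≠ y i) :
    hammingDist (T.piecewise y x) y = hammingDist x y - T.card := by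
  have : univ.filter (fun i => T.piecewise y x i ≠ y i) = (univ.filter fun i => x i ≠ y i) \ T := by
    ext i
    by_cases hi : i ∈ T <;> simp [hi]
  rw [hammingDist, this, card_sdiff_of_subset hT, hammingDist]

end Hamming

theorem stmt1_general {F : Type*} [Field F] [DecidableEq F] (n : ℕ)
    (x y : Fin n → F) (hEven : Even (hammingDist x y)) :
    ∃ z : Fin n → F,
      hammingDist (x + z) y ≤ hammingDist (x + z) x ∧
      ∀ j : ℕ, j ≤ n →
        2 * (Finset.univ.filter (fun i : Fin n => (i : ℕ) < j ∧ z i ≠ 0)).card ≤ j := by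
  obtain ⟨m, hm⟩ := hEven
  obtain ⟨L, -, T, hTS, hL, hT, hlt⟩ :=
    (univ.filter fun i => x i ≠ y i).exists_subsets_card_eq_forall_lt hm
  have hsupp : ∀ i, (T.piecewise y x - x) i ≠ 0 ↔ i ∈ T := fun i =>
    sub_ne_zero.trans (piecewise_ne_left_iff hTS i)
  refine ⟨T.piecewise y x - x, ?_, fun j hj => ?_⟩
  · rw [add_sub_cancel, hammingDist_piecewise_left hTS, hammingDist_piecewise_right hTS]
    omega
  calc 2 * (univ.filter fun i : Fin n => (i : ℕ) < j ∧ (T.piecewise y x - x) i ≠ 0).card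
      = 2 * (T.filter fun i : Fin n => (i : ℕ) < j).card := by
        congr 2; ext i; simp only [mem_filter, mem_univ, true_and, hsupp, and_comm]
    _ ≤ ((L ∪ T).filter fun i : Fin n => (i : ℕ) < j).card :=
        two_mul_card_filter_le_of_forall_lt (hT.trans hL.symm).le hlt _
          fun _ _ hab hb => lt_of_le_of_lt hab hb
    _ ≤ (univ.filter fun i : Fin n => (i : ℕ) < j).card :=
        card_le_card (filter_subset_filter _ (subset_univ _))
    _ = j := by rw [Fin.card_filter_val_lt, min_eq_right hj]

/-- For a finite field `F` and `x, y ∈ F^n` with `Δ(x,y)` even, there exists `z ∈ F^n` with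
`Δ(x+z, x) ≥ Δ(x+z, y)` and, for every `j ≤ n`, the Hamming weight of the prefix
`(z_1, …, z_j)` is at most `j/2`. -/
theorem stmt1 {F : Type*} [Field F] [Fintype F] [DecidableEq F] (n : ℕ)
    (x y : Fin n → F) (hEven : Even (hammingDist x y)) :
    ∃ z : Fin n → F,
      hammingDist (x + z) y ≤ hammingDist (x + z) x ∧
      ∀ j : ℕ, j ≤ n →
        2 * (Finset.univ.filter (fun i : Fin n => (i : ℕ) < j ∧ z i ≠ 0)).card ≤ j :=
  stmt1_general n x y hEven
end
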